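/- Fix integers l ≥ 0 and k ≥ 1. For j ∈ ℤ and n ∈ ℕ let H_n(j, k) := {h ∈ F_n : -k ≤ h(j) ≤ k}. Then lim_{n→∞} |⋃_{j=-l}^{l} H_n(j, k)| / |F_n| = 0; in particular, for each fixed j ∈ ℤ, lim_{n→∞} |H_n(j, k)| / |F_n| = 0. -/

import Mathlib

open Filter

/-- The `h`-right hand-side partial shift `θ_h : ℤ → ℤ`. -/
def theta (h : ℤ) : ℤ → ℤ := fun k => if k < h then k else k + 1

/-- The composition `θ_{-n}^{c(-n)} ∘ θ_{-n+1}^{c(-n+1)} ∘ ⋯ ∘ θ_{n}^{c(n)}`. -/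
def thetaProd (n : ℕ) (c : ℤ → ℕ) : ℤ → ℤ :=
  ((List.range (2 * n + 1)).map
    (fun i => (theta (-(n : ℤ) + i))^[c (-(n : ℤ) + i)])).foldr (· ∘ ·) id

/-- The `n`-th set of the right Følner sequence of `𝕁_ℤ`: maps of the form
`θ_{-n}^{h_{-n}} ∘ ⋯ ∘ θ_{n}^{h_n} ∘ τ^l` with `∑ h_i ≤ n²` and `-n ≤ l ≤ n`. -/
def FolnerSet (n : ℕ) : Set (ℤ → ℤ) :=
  {h | ∃ (c : ℤ → ℕ) (l : ℤ),
    (∑ i ∈ Finset.Icc (-(n : ℤ)) (n : ℤ), c i) ≤ n ^ 2 ∧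
    -(n : ℤ) ≤ l ∧ l ≤ (n : ℤ) ∧
    h = (thetaProd n c) ∘ (fun k => k + l)}


/-- `H_n(j, k) = {h ∈ F_n : -k ≤ h(j) ≤ k}`. -/
def Hset (n : ℕ) (j k : ℤ) : Set (ℤ → ℤ) :=
  {h ∈ FolnerSet n | -k ≤ h j ∧ h j ≤ k}

/-!
Write `h = θ_{-n}^{c(-n)} ∘ ⋯ ∘ θ_n^{c(n)} ∘ τ^l`. Then
`h x = x + l + ∑_{-n ≤ i ≤ x + l} c i`, so `(c, l) ↦ h` is injective on the parameters and
`|F_n|` is `2n + 1` times the number of `c` supported on `[-n, n]` with `∑ c ≤ n²`.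
If `n > k` and `h j ∈ [-k, k]`, then `j + l ∈ [-n, n]` and the prefix sum `∑_{i ≤ j + l} c i`
takes one of `2k + 1` values. For each value, putting the slack `n² - ∑ c` on `j + l` injects
these `c` into those with `∑ c = n²`, which form only a fraction `(2n + 1) / (n + 1)²` of all
admissible `c`. Hence `|H_n(j, k)| ≤ 2 (2k + 1) / (n + 1) · |F_n|`.
-/

open Finset

theorem theta_iterate_apply (h : ℤ) (t : ℕ) (x : ℤ) :
    (theta h)^[t] x = if x < h then x else x + t := by
  induction t with
  | zero => simp
  | succ t ih =>
    rw [Function.iterate_succ_apply', ih]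
    split_ifs with hx <;> simp only [theta] <;> split_ifs <;> push_cast <;> omega

theorem foldr_comp_iterate_theta_apply {L : List ℤ} (hL : L.Pairwise (· < ·)) (c : ℤ → ℕ)
    (x : ℤ) : (L.map fun i => (theta i)^[c i]).foldr (· ∘ ·) id x =
      x + ∑ i ∈ L.toFinset with i ≤ x, (c i : ℤ) := by
  induction L with
  | nil => simp
  | cons a t ih =>
    rw [List.pairwise_cons] at hL
    have hat : a ∉ t.toFinset := fun ha => lt_irrefl a (hL.1 a (List.mem_toFinset.mp ha))
    simp only [List.map_cons, List.foldr_cons, Function.comp_apply, ih hL.2, List.toFinset_cons,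
      filter_insert, theta_iterate_apply]
    by_cases hax : a ≤ x
    · rw [if_pos hax, sum_insert (fun h => hat (mem_filter.mp h).1), if_neg]
      · ring
      · have := sum_nonneg (s := {i ∈ t.toFinset | i ≤ x}) (f := fun i => (c i : ℤ))
          (fun _ _ => by positivity)
        omega
    · have hempty : ({i ∈ t.toFinset | i ≤ x} : Finset ℤ) = ∅ :=
        filter_false_of_mem fun i hi => by
          have := hL.1 i (List.mem_toFinset.mp hi)
          omega
      rw [if_neg hax, hempty, sum_empty, add_zero, if_pos (by omega)]

theorem thetaProd_apply (n : ℕ) (c : ℤ → ℕ) (x : ℤ) :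
    thetaProd n c x = x + ∑ i ∈ Icc (-(n : ℤ)) n with i ≤ x, (c i : ℤ) := by
  set L : List ℤ := (List.range (2 * n + 1)).map fun i : ℕ => -(n : ℤ) + i
  have hL : L.Pairwise (· < ·) :=
    List.pairwise_lt_range.map _ fun a b h => by omega
  have hI : L.toFinset = Icc (-(n : ℤ)) n := by
    ext i
    simp only [L, List.mem_toFinset, List.mem_map, List.mem_range, mem_Icc]
    constructor
    · rintro ⟨m, hm, rfl⟩; omega
    · intro hi; exact ⟨(i + n).toNat, by omega, by omega⟩
  have hrange : (do let a ← List.range (2 * n + 1); pure (a : ℤ) : List ℤ) =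
      (List.range (2 * n + 1)).map (↑) :=
    List.flatMap_pure_eq_map _ _
  rw [← hI, ← foldr_comp_iterate_theta_apply hL, thetaProd, hrange, List.map_map, List.map_map]
  rfl

theorem Nat.multichoose_mul_add_eq_choose_mul (m N : ℕ) :
    m.multichoose N * (N + m) = (N + m).choose m * m := by
  rcases m with _ | m
  · rcases N with _ | N <;> simp [Nat.multichoose_zero_succ]
  · have := Nat.choose_mul_succ_eq (m + N) N
    rw [Nat.choose_symm_of_eq_add (show m + N + 1 = N + (m + 1) by omega),
      show m + N + 1 - N = m + 1 by omega] at this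
    rw [Nat.multichoose_eq, show m + 1 + N - 1 = m + N by omega,
      show N + (m + 1) = m + N + 1 by omega, this]

namespace Finset

variable {ι : Type*} [DecidableEq ι]

theorem pairwiseDisjoint_piAntidiag (s : Finset ι) (t : Set ℕ) :
    t.PairwiseDisjoint (piAntidiag s) := by
  intro p _ q _ hpq
  simp only [Function.onFun, disjoint_left, mem_piAntidiag]
  rintro f ⟨rfl, _⟩ ⟨h, _⟩
  exact hpq h

def piAntidiagLE (s : Finset ι) (N : ℕ) : Finset (ι → ℕ) :=
  (range (N + 1)).disjiUnion (piAntidiag s) (pairwiseDisjoint_piAntidiag s _)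

theorem mem_piAntidiagLE {s : Finset ι} {N : ℕ} {f : ι → ℕ} :
    f ∈ piAntidiagLE s N ↔ ∑ i ∈ s, f i ≤ N ∧ ∀ i, f i ≠ 0 → i ∈ s := by
  simp [piAntidiagLE]

theorem card_piAntidiag_nat (s : Finset ι) (N : ℕ) : #(piAntidiag s N) = (#s).multichoose N := by
  rw [← card_finsuppAntidiag_nat_eq_multichoose, finsuppAntidiag, card_map, card_attach]

theorem card_piAntidiagLE (s : Finset ι) (N : ℕ) :
    #(piAntidiagLE s N) = (N + #s).choose #s := by
  simp only [piAntidiagLE, card_disjiUnion, card_piAntidiag_nat, Nat.sum_range_multichoose]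

theorem card_filter_sum_eq_le_card_piAntidiag (s : Finset ι) (N : ℕ) (P : ι → Prop)
    [DecidablePred P] {a : ι} (ha : a ∈ s) (hPa : P a) (p : ℕ) :
    #{f ∈ piAntidiagLE s N | ∑ i ∈ s with P i, f i = p} ≤ #(piAntidiag s N) := by
  refine card_le_card_of_injOn (fun f => f + Pi.single a (N - ∑ i ∈ s, f i)) ?_ ?_
  · intro f hf
    obtain ⟨hfN, hfs⟩ := mem_piAntidiagLE.mp (mem_filter.mp hf).1
    simp only [mem_coe, mem_piAntidiag, Pi.add_apply, sum_add_distrib, sum_pi_single', if_pos ha]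
    refine ⟨by omega, fun i hi => ?_⟩
    by_cases hfi : f i = 0
    · rw [hfi, zero_add, Pi.single_apply] at hi
      rwa [of_not_not (mt (if_neg · ) hi)]
    · exact hfs i hfi
  · intro f hf g hg hfg
    obtain ⟨-, hfp⟩ := mem_filter.mp hf
    obtain ⟨-, hgp⟩ := mem_filter.mp hg
    have hoff : ∀ i ≠ a, f i = g i := fun i hi => by
      simpa [Pi.single_apply, hi] using congrFun hfg i
    have hsum : ∑ i ∈ s, f i = ∑ i ∈ s, g i := by
      rw [← sum_filter_add_sum_filter_not s P, ← sum_filter_add_sum_filter_not s P g, hfp, hgp]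
      exact congrArg _ (sum_congr rfl fun i hi => hoff i fun h => (mem_filter.mp hi).2 (h ▸ hPa))
    have hfa := congrFun hfg a
    simp only [Pi.add_apply, Pi.single_eq_same, hsum] at hfa
    funext i
    by_cases hi : i = a
    · subst hi; omega
    · exact hoff i hi

end Finset

theorem Int.eqOn_of_forall_sum_filter_le_eq {M : Type*} [AddCancelCommMonoid M] {s : Finset ℤ}
    {c c' : ℤ → M} (h : ∀ y, ∑ i ∈ s with i ≤ y, c i = ∑ i ∈ s with i ≤ y, c' i) :
    Set.EqOn c c' s := by
  intro y hy
  have hsplit : {i ∈ s | i ≤ y} = insert y {i ∈ s | i ≤ y - 1} := by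
    ext i
    simp only [mem_filter, mem_insert]
    constructor
    · rintro ⟨hi, hiy⟩
      rcases eq_or_lt_of_le hiy with rfl | hlt
      · exact Or.inl rfl
      · exact Or.inr ⟨hi, by omega⟩
    · rintro (rfl | ⟨hi, hiy⟩)
      · exact ⟨hy, le_rfl⟩
      · exact ⟨hi, by omega⟩
  have hy' : y ∉ {i ∈ s | i ≤ y - 1} := by simp
  have := h y
  rw [hsplit, sum_insert hy', sum_insert hy', h (y - 1)] at this
  exact add_right_cancel this

theorem thetaProd_congr {n : ℕ} {c c' : ℤ → ℕ} (h : Set.EqOn c c' (Icc (-(n : ℤ)) n)) :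
    thetaProd n c = thetaProd n c' := by
  funext x
  simp only [thetaProd_apply]
  congr 1
  exact sum_congr rfl fun i hi => by rw [h (mem_filter.mp hi).1]

-- `thetaProd n c` only reads `c` on `[-n, n]`, so the exponents may be taken supported there.
noncomputable def folnerParams (n : ℕ) : Finset ((ℤ → ℕ) × ℤ) :=
  piAntidiagLE (Icc (-(n : ℤ)) n) (n ^ 2) ×ˢ Icc (-(n : ℤ)) n

def folnerMap (n : ℕ) (p : (ℤ → ℕ) × ℤ) : ℤ → ℤ :=
  thetaProd n p.1 ∘ (· + p.2)

theorem folnerMap_apply (n : ℕ) (c : ℤ → ℕ) (l x : ℤ) :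
    folnerMap n (c, l) x = x + l + ∑ i ∈ Icc (-(n : ℤ)) n with i ≤ x + l, (c i : ℤ) :=
  thetaProd_apply n c (x + l)

theorem folnerMap_apply_of_lt {n : ℕ} (c : ℤ → ℕ) {l x : ℤ} (h : x + l < -(n : ℤ)) :
    folnerMap n (c, l) x = x + l := by
  rw [folnerMap_apply, add_eq_left]
  exact sum_eq_zero fun i hi => by
    have := (mem_Icc.mp (mem_filter.mp hi).1).1
    have := (mem_filter.mp hi).2
    omega

theorem le_folnerMap_apply (n : ℕ) (c : ℤ → ℕ) (l x : ℤ) :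
    x + l ≤ folnerMap n (c, l) x := by
  rw [folnerMap_apply, le_add_iff_nonneg_right]
  exact sum_nonneg fun _ _ => by positivity

theorem folnerSet_eq_image (n : ℕ) : FolnerSet n = folnerMap n '' folnerParams n := by
  ext h
  constructor
  · rintro ⟨c, l, hc, hl₁, hl₂, rfl⟩
    let c' : ℤ → ℕ := fun i => if i ∈ Icc (-(n : ℤ)) n then c i else 0
    have hcc' : ∀ i ∈ Icc (-(n : ℤ)) n, c i = c' i := fun i hi => (if_pos hi).symm
    refine ⟨(c', l), mem_product.mpr ⟨mem_piAntidiagLE.mpr ⟨?_, fun i hi => ?_⟩,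
      mem_Icc.mpr ⟨hl₁, hl₂⟩⟩, ?_⟩
    · rwa [← sum_congr rfl hcc']
    · by_contra hni
      exact hi (if_neg hni)
    · rw [folnerMap, thetaProd_congr hcc']
  · rintro ⟨⟨c, l⟩, hp, rfl⟩
    obtain ⟨hc, hl⟩ := mem_product.mp hp
    exact ⟨c, l, (mem_piAntidiagLE.mp hc).1, (mem_Icc.mp hl).1, (mem_Icc.mp hl).2, rfl⟩

theorem injOn_folnerMap (n : ℕ) : Set.InjOn (folnerMap n) (folnerParams n) := by
  rintro ⟨c, l⟩ hp ⟨c', l'⟩ hp' heq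
  obtain ⟨hc, hl⟩ : c ∈ piAntidiagLE _ _ ∧ l ∈ Icc _ _ := mem_product.mp hp
  obtain ⟨hc', hl'⟩ : c' ∈ piAntidiagLE _ _ ∧ l' ∈ Icc _ _ := mem_product.mp hp'
  have hll' : l = l' := by
    have := congrFun heq (-2 * n - 1)
    rw [mem_Icc] at hl hl'
    rwa [folnerMap_apply_of_lt c (by omega), folnerMap_apply_of_lt c' (by omega),
      add_right_inj] at this
  subst hll'
  have hsums : ∀ y, ∑ i ∈ Icc (-(n : ℤ)) n with i ≤ y, (c i : ℤ) =
      ∑ i ∈ Icc (-(n : ℤ)) n with i ≤ y, (c' i : ℤ) := fun y => by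
    have := congrFun heq (y - l)
    rw [folnerMap_apply, folnerMap_apply, sub_add_cancel] at this
    omega
  have hcc' := Int.eqOn_of_forall_sum_filter_le_eq hsums
  congr 1
  funext i
  by_cases hi : i ∈ Icc (-(n : ℤ)) n
  · exact Int.ofNat_inj.mp (hcc' hi)
  · rw [of_not_not (mt ((mem_piAntidiagLE.mp hc).2 i) hi),
      of_not_not (mt ((mem_piAntidiagLE.mp hc').2 i) hi)]

theorem card_Icc_neg_self (n : ℕ) : #(Icc (-(n : ℤ)) n) = 2 * n + 1 := by
  rw [Int.card_Icc]
  omega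

theorem ncard_folnerSet (n : ℕ) :
    (FolnerSet n).ncard = (n ^ 2 + (2 * n + 1)).choose (2 * n + 1) * (2 * n + 1) := by
  rw [folnerSet_eq_image, (injOn_folnerMap n).ncard_image, Set.ncard_coe_finset, folnerParams,
    card_product, card_piAntidiagLE, card_Icc_neg_self]

theorem card_filter_folnerMap_apply_eq_le {n : ℕ} (j l : ℤ) {a : ℤ}
    (ha : a ∈ Icc (-(n : ℤ)) n) :
    #{c ∈ piAntidiagLE (Icc (-(n : ℤ)) n) (n ^ 2) | folnerMap n (c, l) j = a} ≤
      #(piAntidiag (Icc (-(n : ℤ)) n) (n ^ 2)) := by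
  by_cases hx : j + l ∈ Icc (-(n : ℤ)) n
  · simp only [folnerMap_apply]
    calc _ ≤ #{c ∈ piAntidiagLE (Icc (-(n : ℤ)) n) (n ^ 2) |
              ∑ i ∈ Icc (-(n : ℤ)) n with i ≤ j + l, c i = (a - (j + l)).toNat} := by
          refine card_le_card fun c hc => ?_
          rw [mem_filter] at hc ⊢
          refine ⟨hc.1, ?_⟩
          have := hc.2
          rw [← Nat.cast_sum] at this
          omega
      _ ≤ _ := card_filter_sum_eq_le_card_piAntidiag _ _ (· ≤ j + l) hx le_rfl _
  · have hne : ∀ c : ℤ → ℕ, folnerMap n (c, l) j ≠ a := fun c => by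
      rw [mem_Icc] at ha hx
      rcases not_and_or.mp hx with hlt | hgt
      · rw [folnerMap_apply_of_lt c (by omega)]
        omega
      · have := le_folnerMap_apply n c l j
        omega
    rw [filter_false_of_mem fun c _ => hne c, card_empty]
    exact Nat.zero_le _

theorem card_filter_folnerParams_apply_eq_le {n : ℕ} (j : ℤ) {a : ℤ}
    (ha : a ∈ Icc (-(n : ℤ)) n) :
    #{p ∈ folnerParams n | folnerMap n p j = a} ≤
      (2 * n + 1) * #(piAntidiag (Icc (-(n : ℤ)) n) (n ^ 2)) := by
  rw [folnerParams, card_filter, sum_product_right]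
  calc _ ≤ ∑ l ∈ Icc (-(n : ℤ)) n, #(piAntidiag (Icc (-(n : ℤ)) n) (n ^ 2)) :=
        sum_le_sum fun l _ => by
          rw [← card_filter]
          exact card_filter_folnerMap_apply_eq_le j l ha
    _ = _ := by
      rw [sum_const, card_Icc_neg_self, smul_eq_mul]

theorem ncard_hset_le {n : ℕ} {k : ℤ} (hkn : k < n) (j : ℤ) :
    (Hset n j k).ncard ≤
      (2 * n + 1) * #(piAntidiag (Icc (-(n : ℤ)) n) (n ^ 2)) * (2 * k + 1).toNat := by
  set Q := {p ∈ folnerParams n | folnerMap n p j ∈ Icc (-k) k}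
  have hsub : Hset n j k ⊆ folnerMap n '' Q := by
    rintro h ⟨hF, hk₁, hk₂⟩
    rw [folnerSet_eq_image] at hF
    obtain ⟨p, hp, rfl⟩ := hF
    exact ⟨p, mem_coe.mpr (mem_filter.mpr ⟨hp, mem_Icc.mpr ⟨hk₁, hk₂⟩⟩), rfl⟩
  have himage : #(Q.image (folnerMap n · j)) ≤ (2 * k + 1).toNat := by
    calc _ ≤ #(Icc (-k) k) := card_le_card fun a ha => by
          obtain ⟨p, hp, rfl⟩ := mem_image.mp ha
          exact (mem_filter.mp hp).2
      _ = _ := by rw [Int.card_Icc]; congr 1; ring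
  calc (Hset n j k).ncard ≤ (folnerMap n '' Q).ncard := Set.ncard_le_ncard hsub (Set.toFinite _)
    _ ≤ #Q := (Set.ncard_image_le Q.finite_toSet).trans (Set.ncard_coe_finset Q).le
    _ ≤ (2 * n + 1) * #(piAntidiag (Icc (-(n : ℤ)) n) (n ^ 2)) *
          #(Q.image (folnerMap n · j)) := by
        refine card_le_mul_card_image Q _ fun a ha => ?_
        obtain ⟨p, hp, rfl⟩ := mem_image.mp ha
        have := mem_Icc.mp (mem_filter.mp hp).2
        refine (card_le_card (filter_subset_filter _ (filter_subset _ _))).trans ?_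
        exact card_filter_folnerParams_apply_eq_le j (mem_Icc.mpr ⟨by omega, by omega⟩)
    _ ≤ _ := Nat.mul_le_mul_left _ himage

theorem ncard_hset_mul_le {n : ℕ} {k : ℤ} (hkn : k < n) (j : ℤ) :
    (Hset n j k).ncard * (n + 1) ≤ 2 * (2 * k + 1).toNat * (FolnerSet n).ncard := by
  have hEL : #(piAntidiag (Icc (-(n : ℤ)) n) (n ^ 2)) * (n ^ 2 + (2 * n + 1)) =
      (n ^ 2 + (2 * n + 1)).choose (2 * n + 1) * (2 * n + 1) := by
    rw [card_piAntidiag_nat, card_Icc_neg_self]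
    exact Nat.multichoose_mul_add_eq_choose_mul _ _
  have hH := ncard_hset_le hkn j
  rw [ncard_folnerSet]
  set E := #(piAntidiag (Icc (-(n : ℤ)) n) (n ^ 2))
  set L := (n ^ 2 + (2 * n + 1)).choose (2 * n + 1)
  set K := (2 * k + 1).toNat
  refine Nat.le_of_mul_le_mul_right (c := n + 1) ?_ (Nat.succ_pos n)
  calc (Hset n j k).ncard * (n + 1) * (n + 1)
      ≤ (2 * n + 1) * E * K * (n + 1) ^ 2 := by nlinarith
    _ = K * (2 * n + 1) * (L * (2 * n + 1)) := by rw [← hEL]; ring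
    _ ≤ 2 * K * (L * (2 * n + 1)) * (n + 1) := by nlinarith

theorem tendsto_ncard_biUnion_hset_div (k : ℤ) (J : Finset ℤ) :
    Tendsto (fun n : ℕ => ((⋃ j ∈ J, Hset n j k).ncard : ℝ) / (FolnerSet n).ncard)
      atTop (nhds 0) := by
  set C : ℝ := #J * (2 * (2 * k + 1).toNat)
  have hbound : ∀ n : ℕ, k < n →
      ((⋃ j ∈ J, Hset n j k).ncard : ℝ) / (FolnerSet n).ncard ≤
        C * (1 / ((n : ℝ) + 1)) := by
    intro n hkn
    have hF : (0 : ℝ) < (FolnerSet n).ncard := by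
      rw [ncard_folnerSet]
      exact_mod_cast Nat.mul_pos (Nat.choose_pos (by omega)) (by omega)
    have hnat : (⋃ j ∈ J, Hset n j k).ncard * (n + 1) ≤
        #J * (2 * (2 * k + 1).toNat * (FolnerSet n).ncard) :=
      calc _ ≤ (∑ j ∈ J, (Hset n j k).ncard) * (n + 1) :=
            Nat.mul_le_mul_right _ (set_ncard_biUnion_le J _)
        _ = ∑ j ∈ J, (Hset n j k).ncard * (n + 1) := sum_mul ..
        _ ≤ _ := (sum_le_sum fun j _ => ncard_hset_mul_le hkn j).trans_eq
            (by rw [sum_const, smul_eq_mul])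
    have hreal : ((⋃ j ∈ J, Hset n j k).ncard : ℝ) * (n + 1) ≤ C * (FolnerSet n).ncard := by
      have := (Nat.cast_le (α := ℝ)).mpr hnat
      push_cast at this
      linarith
    rw [div_le_iff₀ hF, mul_one_div, div_mul_eq_mul_div, le_div_iff₀ (by positivity)]
    exact hreal
  have hlim : Tendsto (fun n : ℕ => C * (1 / ((n : ℝ) + 1))) atTop (nhds 0) := by
    simpa using tendsto_one_div_add_atTop_nhds_zero_nat.const_mul C
  refine tendsto_of_tendsto_of_tendsto_of_le_of_le' tendsto_const_nhds hlim ?_ ?_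
  · exact Eventually.of_forall fun n => by positivity
  · filter_upwards [eventually_gt_atTop k.toNat] with n hn
    exact hbound n (by omega)

theorem stmt1_general (l k : ℤ) :
    Tendsto (fun n : ℕ =>
        (((⋃ j ∈ Set.Icc (-l) l, Hset n j k).ncard : ℝ)
          / ((FolnerSet n).ncard : ℝ)) : ℕ → ℝ) atTop (nhds 0) ∧
      ∀ j : ℤ, Tendsto (fun n : ℕ =>
        (((Hset n j k).ncard : ℝ)
          / ((FolnerSet n).ncard : ℝ)) : ℕ → ℝ) atTop (nhds 0) := by
  refine ⟨?_, fun j => ?_⟩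
  · simpa using tendsto_ncard_biUnion_hset_div k (Icc (-l) l)
  · simpa using tendsto_ncard_biUnion_hset_div k {j}

theorem stmt1 (l k : ℤ) (hl : 0 ≤ l) (hk : 1 ≤ k) :
    Tendsto (fun n : ℕ =>
        (((⋃ j ∈ Set.Icc (-l) l, Hset n j k).ncard : ℝ)
          / ((FolnerSet n).ncard : ℝ)) : ℕ → ℝ) atTop (nhds 0) ∧
      ∀ j : ℤ, Tendsto (fun n : ℕ =>
        (((Hset n j k).ncard : ℝ)
          / ((FolnerSet n).ncard : ℝ)) : ℕ → ℝ) atTop (nhds 0) :=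
  stmt1_general l k
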